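/- For any n×n correlation matrix C ≠ Id (n ≥ 2) with characteristic (c,σ), the maximal weight w_max := max_j ⟨v_j,δ_n⟩² over an orthonormal eigenbasis satisfies w_max ≥ s(g_n(c²/(c²+σ²))). -/
import Mathlib

noncomputable def sFun (x : ℝ) : ℝ := if 1 / 2 ≤ x then (1 + Real.sqrt (2 * x - 1)) / 2 else x

lemma maxweight_aux (n : ℕ) (w : Fin n → ℝ) (hw0 : ∀ j, 0 ≤ w j)
    (hw1 : ∑ j, w j = 1) (x : ℝ) (hx : x ≤ ∑ j, w j ^ 2)
    (ne : (Finset.univ : Finset (Fin n)).Nonempty) :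
    Finset.univ.sup' ne w ≥ sFun x := by
  obtain ⟨j0, -, hj0⟩ := Finset.exists_mem_eq_sup' ne w
  rw [ge_iff_le, hj0]
  set W := w j0 with hW
  have hle : ∀ j, w j ≤ W := fun j => hj0 ▸ Finset.le_sup' w (Finset.mem_univ j)
  have hW0 : 0 ≤ W := hw0 j0
  have hsqW : ∑ j, w j ^ 2 ≤ W := by
    calc ∑ j, w j ^ 2 ≤ ∑ j, W * w j := by
          refine Finset.sum_le_sum fun j _ => ?_
          rw [sq]; exact mul_le_mul_of_nonneg_right (hle j) (hw0 j)
      _ = W := by rw [← Finset.mul_sum, hw1, mul_one]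
  have hxW : x ≤ W := hx.trans hsqW
  have hsplit : ∑ j, w j ^ 2 ≤ W ^ 2 + (1 - W) ^ 2 := by
    have h1 : ∑ j, w j ^ 2 = w j0 ^ 2 + ∑ j ∈ Finset.univ.erase j0, w j ^ 2 :=
      (Finset.add_sum_erase Finset.univ (fun j => w j ^ 2) (Finset.mem_univ j0)).symm
    have h2 : ∑ j ∈ Finset.univ.erase j0, w j ^ 2 ≤ (∑ j ∈ Finset.univ.erase j0, w j) ^ 2 :=
      Finset.sum_sq_le_sq_sum_of_nonneg (fun j _ => hw0 j)
    have h3 : ∑ j ∈ Finset.univ.erase j0, w j = 1 - W := by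
      have := Finset.add_sum_erase Finset.univ w (Finset.mem_univ j0)
      rw [hw1] at this; linarith
    rw [h1, ← hW]
    calc W ^ 2 + ∑ j ∈ Finset.univ.erase j0, w j ^ 2
        ≤ W ^ 2 + (∑ j ∈ Finset.univ.erase j0, w j) ^ 2 := by linarith
      _ = W ^ 2 + (1 - W) ^ 2 := by rw [h3]
  have hxWW : x ≤ W ^ 2 + (1 - W) ^ 2 := hx.trans hsplit
  unfold sFun
  split_ifs with h
  · have hW2 : 1 / 2 ≤ W := h.trans hxW
    have h1 : 2 * x - 1 ≤ (2 * W - 1) ^ 2 := by nlinarith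
    have h2 : Real.sqrt (2 * x - 1) ≤ 2 * W - 1 := by
      have := Real.sqrt_le_sqrt h1
      rwa [Real.sqrt_sq (by linarith)] at this
    rw [div_le_iff₀ (by norm_num : (0:ℝ) < 2)]
    linarith
  · exact hxW

lemma pairs_aux (n : ℕ) (f : Fin n → Fin n → ℝ) (hsymm : ∀ i k, f k i = f i k) :
    ∑ i, ∑ k, f i k
      = (∑ i, f i i) + 2 * ∑ i, ∑ k ∈ Finset.univ.filter (fun k => k < i), f i k := by
  have hup : ∑ i, ∑ k ∈ Finset.univ.filter (fun k => i < k), f i k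
      = ∑ i, ∑ k ∈ Finset.univ.filter (fun k => k < i), f i k := by
    rw [Finset.sum_comm' (t' := Finset.univ) (s' := fun k => Finset.univ.filter (fun i => i < k))]
    · exact Finset.sum_congr rfl fun k _ => Finset.sum_congr rfl fun i _ => hsymm k i
    · intro i k; simp [Finset.mem_filter]
  have hsplit : ∀ i : Fin n, ∑ k, f i k = f i i
      + (∑ k ∈ Finset.univ.filter (fun k => k < i), f i k
        + ∑ k ∈ Finset.univ.filter (fun k => i < k), f i k) := by
    intro i
    have hu : (Finset.univ : Finset (Fin n)) = insert i
        ((Finset.univ.filter (fun k => k < i)) ∪ (Finset.univ.filter (fun k => i < k))) := by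
      ext k
      simp only [Finset.mem_univ, Finset.mem_insert, Finset.mem_union, Finset.mem_filter,
        true_and, true_iff]
      rcases lt_trichotomy k i with h | h | h <;> tauto
    have hd : Disjoint (Finset.univ.filter (fun k : Fin n => k < i))
        (Finset.univ.filter (fun k => i < k)) := by
      rw [Finset.disjoint_left]
      intro k h1 h2
      simp only [Finset.mem_filter] at h1 h2
      exact absurd (h1.2.trans h2.2) (lt_irrefl k)
    have hni : i ∉ (Finset.univ.filter (fun k : Fin n => k < i))
        ∪ (Finset.univ.filter (fun k => i < k)) := by simp
    conv_lhs => rw [hu]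
    rw [Finset.sum_insert hni, Finset.sum_union hd]
  rw [Finset.sum_congr rfl fun i _ => hsplit i]
  rw [Finset.sum_add_distrib, Finset.sum_add_distrib, hup]; ring

lemma sum_swap4 {n : ℕ} (g : Fin n → Fin n → Fin n → Fin n → ℝ) :
    ∑ i, ∑ k, ∑ j, ∑ j', g i k j j' = ∑ j, ∑ j', ∑ i, ∑ k, g i k j j' := by
  calc ∑ i, ∑ k, ∑ j, ∑ j', g i k j j'
      = ∑ i, ∑ j, ∑ k, ∑ j', g i k j j' :=
        Finset.sum_congr rfl fun i _ => Finset.sum_comm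
    _ = ∑ j, ∑ i, ∑ k, ∑ j', g i k j j' := Finset.sum_comm
    _ = ∑ j, ∑ i, ∑ j', ∑ k, g i k j j' :=
        Finset.sum_congr rfl fun j _ => Finset.sum_congr rfl fun i _ => Finset.sum_comm
    _ = ∑ j, ∑ j', ∑ i, ∑ k, g i k j j' :=
        Finset.sum_congr rfl fun j _ => Finset.sum_comm

set_option maxHeartbeats 2000000 in
/-- For a correlation matrix `C ≠ Id`, one has `w_max ≥ s(g_n(c²/(c²+σ²)))`. -/
theorem stmt_10 (n : ℕ) (hn : 2 ≤ n) (C : Matrix (Fin n) (Fin n) ℝ)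
    (hpsd : C.PosSemidef) (hdiag : ∀ i, C i i = 1) (hne : C ≠ 1)
    (lam : Fin n → ℝ) (v : Fin n → (Fin n → ℝ))
    (heig : ∀ j, C.mulVec (v j) = lam j • v j)
    (horth : ∀ j k, ∑ i, v j i * v k i = if j = k then (1 : ℝ) else 0) :
    Finset.univ.sup' (Finset.univ_nonempty_iff.mpr ⟨⟨0, by omega⟩⟩)
        (fun j => (∑ i, v j i * (Real.sqrt n)⁻¹) ^ 2) ≥
      sFun ((((n : ℝ) - 1) *
          (((2 / ((n : ℝ) * ((n : ℝ) - 1))) *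
              ∑ i : Fin n, ∑ j ∈ Finset.univ.filter (fun j => j < i), C i j) ^ 2 /
            ((2 / ((n : ℝ) * ((n : ℝ) - 1))) *
              ∑ i : Fin n, ∑ j ∈ Finset.univ.filter (fun j => j < i), C i j ^ 2)) + 1) / (n : ℝ)) := by
  have hn1 : (1 : ℝ) < n := by exact_mod_cast hn
  have hn0 : (0 : ℝ) < n := by linarith
  set a : ℝ := (Real.sqrt n)⁻¹ with ha
  set t : Fin n → ℝ := fun j => ∑ i, v j i * a with ht
  set s1 : ℝ := ∑ i : Fin n, ∑ j ∈ Finset.univ.filter (fun j => j < i), C i j with hs1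
  set s2 : ℝ := ∑ i : Fin n, ∑ j ∈ Finset.univ.filter (fun j => j < i), C i j ^ 2 with hs2
  have ha2 : a ^ 2 = 1 / (n : ℝ) := by
    rw [ha, inv_pow, Real.sq_sqrt hn0.le, one_div]
  -- columns of the eigenvector matrix are orthonormal
  have hcol : ∀ i k : Fin n, ∑ j, v j i * v j k = if i = k then (1 : ℝ) else 0 := by
    have hVVt : (Matrix.of v) * (Matrix.of v).transpose = 1 := by
      ext j k
      simp only [Matrix.mul_apply, Matrix.transpose_apply, Matrix.of_apply, Matrix.one_apply]
      exact horth j k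
    have hVtV := mul_eq_one_comm.mp hVVt
    intro i k
    have h := congrFun (congrFun hVtV i) k
    simpa [Matrix.mul_apply, Matrix.transpose_apply, Matrix.of_apply, Matrix.one_apply] using h
  have heig' : ∀ j i, ∑ m, C i m * v j m = lam j * v j i := by
    intro j i
    have h := congrFun (heig j) i
    simpa [Matrix.mulVec, dotProduct] using h
  -- spectral decomposition entrywise
  have hspec : ∀ i k, C i k = ∑ j, lam j * (v j i * v j k) := by
    intro i k
    have h1 : ∑ m, C i m * ∑ j, v j m * v j k = C i k := by
      simp only [hcol, mul_ite, mul_one, mul_zero]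
      simp
    rw [← h1]
    simp_rw [Finset.mul_sum]
    rw [Finset.sum_comm]
    refine Finset.sum_congr rfl fun j _ => ?_
    have h2 : ∑ m, C i m * (v j m * v j k) = (∑ m, C i m * v j m) * v j k := by
      rw [Finset.sum_mul]; exact Finset.sum_congr rfl fun m _ => by ring
    rw [h2, heig' j i]; ring
  -- trace identity
  have htr : ∑ j, lam j = (n : ℝ) := by
    have h1 : ∑ i, C i i = (n : ℝ) := by simp [hdiag]
    have h2 : ∑ i, C i i = ∑ j, lam j := by
      simp_rw [hspec]
      rw [Finset.sum_comm]
      refine Finset.sum_congr rfl fun j _ => ?_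
      rw [← Finset.mul_sum, horth j j]
      simp
    rw [← h2, h1]
  -- Frobenius identity
  have hfrob : ∑ i, ∑ k, (C i k) ^ 2 = ∑ j, lam j ^ 2 := by
    have expand : ∀ i k : Fin n, (C i k) ^ 2
        = ∑ j, ∑ j', (lam j * lam j') * ((v j i * v j' i) * (v j k * v j' k)) := by
      intro i k
      rw [sq, hspec i k, Finset.sum_mul_sum]
      exact Finset.sum_congr rfl fun j _ => Finset.sum_congr rfl fun j' _ => by ring
    simp_rw [expand]
    have swap : ∑ i : Fin n, ∑ k : Fin n, ∑ j : Fin n, ∑ j' : Fin n,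
          (lam j * lam j') * ((v j i * v j' i) * (v j k * v j' k))
        = ∑ j : Fin n, ∑ j' : Fin n, ∑ i : Fin n, ∑ k : Fin n,
          (lam j * lam j') * ((v j i * v j' i) * (v j k * v j' k)) := by
      rw [sum_swap4]
    rw [swap]
    refine Finset.sum_congr rfl fun j _ => ?_
    have inner : ∀ j' : Fin n, ∑ i : Fin n, ∑ k : Fin n,
          (lam j * lam j') * ((v j i * v j' i) * (v j k * v j' k))
        = (lam j * lam j') * ((∑ i, v j i * v j' i) * (∑ k, v j k * v j' k)) := by
      intro j'
      rw [Finset.sum_mul_sum, Finset.mul_sum]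
      refine Finset.sum_congr rfl fun i _ => ?_
      rw [Finset.mul_sum]
    simp_rw [inner, horth]
    simp [sq]
  -- generic weighted sum swap for the uniform vector weights
  have hsw : ∀ g : Fin n → ℝ, ∑ j, g j * t j ^ 2
      = a ^ 2 * ∑ i, ∑ k, ∑ j, g j * (v j i * v j k) := by
    intro g
    have e1 : ∀ j, g j * t j ^ 2 = ∑ i, ∑ k, a ^ 2 * (g j * (v j i * v j k)) := by
      intro j
      simp only [ht]
      rw [sq, Finset.sum_mul_sum, Finset.mul_sum]
      refine Finset.sum_congr rfl fun i _ => ?_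
      rw [Finset.mul_sum]
      exact Finset.sum_congr rfl fun k _ => by ring
    simp_rw [e1]
    calc ∑ j, ∑ i, ∑ k, a ^ 2 * (g j * (v j i * v j k))
        = ∑ i, ∑ j, ∑ k, a ^ 2 * (g j * (v j i * v j k)) := Finset.sum_comm
      _ = ∑ i, ∑ k, ∑ j, a ^ 2 * (g j * (v j i * v j k)) :=
          Finset.sum_congr rfl fun i _ => Finset.sum_comm
      _ = a ^ 2 * ∑ i, ∑ k, ∑ j, g j * (v j i * v j k) := by
          rw [Finset.mul_sum]
          refine Finset.sum_congr rfl fun i _ => ?_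
          rw [Finset.mul_sum]
          refine Finset.sum_congr rfl fun k _ => ?_
          rw [Finset.mul_sum]
  have hwsum : ∑ j, t j ^ 2 = 1 := by
    have h1 : ∑ j, (1 : ℝ) * t j ^ 2 = a ^ 2 * ∑ i, ∑ k, ∑ j, (1 : ℝ) * (v j i * v j k) :=
      hsw (fun _ => 1)
    simp only [one_mul] at h1
    rw [h1]
    simp_rw [hcol]
    rw [ha2]
    simp
    field_simp
  have hq : ∑ j, lam j * t j ^ 2 = a ^ 2 * ∑ i, ∑ k, C i k := by
    rw [hsw lam]
    exact congrArg _ (Finset.sum_congr rfl fun i _ =>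
      Finset.sum_congr rfl fun k _ => (hspec i k).symm)
  have hsym : ∀ i k : Fin n, C k i = C i k := by
    intro i k
    have h := hpsd.1.apply i k
    simpa using h
  have hCsum : ∑ i, ∑ k, C i k = (n : ℝ) + 2 * s1 := by
    rw [pairs_aux n (fun i k => C i k) hsym]
    simp [hdiag, hs1]
  have hC2sum : ∑ i, ∑ k, C i k ^ 2 = (n : ℝ) + 2 * s2 := by
    rw [pairs_aux n (fun i k => C i k ^ 2) (fun i k => by
      show C k i ^ 2 = C i k ^ 2; rw [hsym])]
    simp [hdiag, hs2]
  have hlam2 : ∑ j, lam j ^ 2 = (n : ℝ) + 2 * s2 := by rw [← hfrob, hC2sum]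
  -- s2 is positive since C ≠ 1
  have hS2pos : 0 < s2 := by
    have h0 : 0 ≤ s2 := by rw [hs2]; positivity
    rcases h0.lt_or_eq with h | h
    · exact h
    · exfalso
      apply hne
      have hz : ∀ i k : Fin n, k < i → C i k = 0 := by
        intro i k hki
        have hinner : ∀ i ∈ (Finset.univ : Finset (Fin n)),
            ∑ j ∈ Finset.univ.filter (fun j => j < i), C i j ^ 2 = 0 :=
          (Finset.sum_eq_zero_iff_of_nonneg (fun i _ => by positivity)).mp (hs2 ▸ h.symm)
        have hterm := (Finset.sum_eq_zero_iff_of_nonneg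
          (fun k _ => sq_nonneg (C i k))).mp (hinner i (Finset.mem_univ i)) k
          (Finset.mem_filter.mpr ⟨Finset.mem_univ k, hki⟩)
        exact (pow_eq_zero_iff two_ne_zero).mp hterm
      ext i k
      rw [Matrix.one_apply]
      rcases lt_trichotomy i k with hik | hik | hik
      · rw [if_neg (Fin.ne_of_lt hik), hsym k i]
        exact hz k i hik
      · subst hik; simp [hdiag]
      · rw [if_neg (Fin.ne_of_gt hik)]
        exact hz i k hik
  have hs2ne : s2 ≠ 0 := ne_of_gt hS2pos
  have hn1ne : (n : ℝ) - 1 ≠ 0 := by linarith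
  have hnne : (n : ℝ) ≠ 0 := ne_of_gt hn0
  -- key sums for Cauchy–Schwarz
  have he1 : ∑ j, lam j * t j ^ 2 = 1 + 2 * s1 / n := by
    rw [hq, hCsum, ha2]
    field_simp
  have hmusq : ∑ j, (lam j - 1) ^ 2 = 2 * s2 := by
    have e : ∀ j : Fin n, (lam j - 1) ^ 2 = lam j ^ 2 - 2 * lam j + 1 := fun j => by ring
    simp_rw [e]
    rw [Finset.sum_add_distrib, Finset.sum_sub_distrib, hlam2, ← Finset.mul_sum, htr,
      Finset.sum_const, Finset.card_univ, Fintype.card_fin, nsmul_eq_mul, mul_one]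
    ring
  have hmu_u : ∑ j, (lam j - 1) * (t j ^ 2 - 1 / n) = 2 * s1 / n := by
    have e : ∀ j : Fin n, (lam j - 1) * (t j ^ 2 - 1 / (n : ℝ))
        = lam j * t j ^ 2 - (1 / n) * lam j - t j ^ 2 + 1 / n := fun j => by ring
    simp_rw [e]
    rw [Finset.sum_add_distrib, Finset.sum_sub_distrib, Finset.sum_sub_distrib,
      ← Finset.mul_sum, htr, he1, hwsum, Finset.sum_const, Finset.card_univ,
      Fintype.card_fin, nsmul_eq_mul, one_div_mul_cancel hnne, mul_one_div_cancel hnne]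
    ring
  have hu2 : ∑ j, (t j ^ 2 - 1 / n) ^ 2 = (∑ j, (t j ^ 2) ^ 2) - 1 / n := by
    have e : ∀ j : Fin n, (t j ^ 2 - 1 / (n : ℝ)) ^ 2
        = (t j ^ 2) ^ 2 - (2 / n) * t j ^ 2 + 1 / n ^ 2 := fun j => by ring
    simp_rw [e]
    rw [Finset.sum_add_distrib, Finset.sum_sub_distrib, ← Finset.mul_sum, hwsum,
      Finset.sum_const, Finset.card_univ, Fintype.card_fin, nsmul_eq_mul]
    have h9 : (n : ℝ) * (1 / (n : ℝ) ^ 2) = 1 / (n : ℝ) := by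
      rw [one_div, one_div, pow_two, mul_inv, ← mul_assoc, mul_inv_cancel₀ hnne, one_mul]
    rw [h9]
    ring
  have hcs := Finset.sum_mul_sq_le_sq_mul_sq Finset.univ (fun j => lam j - 1)
    (fun j => t j ^ 2 - 1 / n)
  rw [hmu_u, hmusq, hu2] at hcs
  set T : ℝ := ∑ j, (t j ^ 2) ^ 2 with hT
  -- deduce the lower bound on the sum of squared weights
  have hxT : (((n : ℝ) - 1) * ((2 / ((n : ℝ) * ((n : ℝ) - 1)) * s1) ^ 2
      / (2 / ((n : ℝ) * ((n : ℝ) - 1)) * s2)) + 1) / (n : ℝ) ≤ T := by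
    have hxval : (((n : ℝ) - 1) * ((2 / ((n : ℝ) * ((n : ℝ) - 1)) * s1) ^ 2
        / (2 / ((n : ℝ) * ((n : ℝ) - 1)) * s2)) + 1) / (n : ℝ)
        = 2 * s1 ^ 2 / ((n : ℝ) ^ 2 * s2) + 1 / n := by
      field_simp
    rw [hxval]
    have h1 : (2 * s1 / n) ^ 2 = 4 * s1 ^ 2 / (n : ℝ) ^ 2 := by ring
    rw [h1] at hcs
    rw [div_le_iff₀ (by positivity : (0:ℝ) < (n:ℝ)^2)] at hcs
    have h2 : 2 * s1 ^ 2 / ((n : ℝ) ^ 2 * s2) ≤ T - 1 / n := by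
      rw [div_le_iff₀ (by positivity : (0:ℝ) < (n:ℝ)^2 * s2)]
      nlinarith [hcs]
    linarith
  exact maxweight_aux n (fun j => (∑ i, v j i * a) ^ 2) (fun j => sq_nonneg _) hwsum _ hxT _
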